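/- The composite φ̃ ∘ ψ̃ is the identity on the marked chain polytope C(P,A)_λ. -/

import Mathlib

open Finset Set

section Marked

variable {P : Type*} [PartialOrder P]

/-- A marked poset: `A` contains all extremal (minimal or maximal) elements of `P`. -/
def IsMarkedPoset (A : Set P) : Prop := ∀ p : P, IsMin p ∨ IsMax p → p ∈ A

/-- The marked order polytope `O(P,A)_λ ⊆ ℝ^{P-A}`. -/
def markedOrderPolytope (A : Set P) (lam : P → ℝ) : Set ({p : P // p ∉ A} → ℝ) :=
  {x | (∀ p q : {p : P // p ∉ A}, (p : P) < (q : P) → x p ≤ x q) ∧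
       (∀ a ∈ A, ∀ p : {p : P // p ∉ A}, a < (p : P) → lam a ≤ x p) ∧
       (∀ a ∈ A, ∀ p : {p : P // p ∉ A}, (p : P) < a → x p ≤ lam a)}

/-- The marked chain polytope `C(P,A)_λ ⊆ ℝ^{P-A}`. -/
def markedChainPolytope (A : Set P) (lam : P → ℝ) : Set ({p : P // p ∉ A} → ℝ) :=
  {x | (∀ p, 0 ≤ x p) ∧
       ∀ a ∈ A, ∀ b ∈ A, ∀ (k : ℕ) (c : Fin (k + 1) → {p : P // p ∉ A}),
         StrictMono c → a < (c 0 : P) → (c (Fin.last k) : P) < b →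
         ∑ i, x (c i) ≤ lam b - lam a}

/-- The transfer map `φ̃`: `φ̃(x)_p` is the minimum of `x_p - x_q` over covers `q ⋖ p`,
where `x_q` is read as `λ_q` when `q ∈ A`. -/
noncomputable def transferMap (A : Set P) (lam : P → ℝ)
    (x : {p : P // p ∉ A} → ℝ) : {p : P // p ∉ A} → ℝ := fun p =>
  sInf ({v | ∃ q : {p : P // p ∉ A}, (q : P) ⋖ (p : P) ∧ v = x p - x q} ∪
        {v | ∃ a ∈ A, a ⋖ (p : P) ∧ v = x p - lam a})

open scoped Classical in
/-- The map `ψ`, defined recursively going up the poset: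
`ψ(y)_p = λ_p` for `p ∈ A`, and `ψ(y)_p = y_p + max {ψ(y)_q : p ≻ q}` for `p ∉ A`. -/
noncomputable def psiFull [Finite P] (A : Set P) (lam : P → ℝ)
    (y : {p : P // p ∉ A} → ℝ) : P → ℝ :=
  WellFounded.fix wellFounded_lt (fun p ih =>
    if h : p ∈ A then lam p
    else y ⟨p, h⟩ + sSup {v | ∃ q, ∃ hq : q ⋖ p, v = ih q hq.lt})

/-- `ψ̃(y)`: the restriction of `ψ(y)` to the coordinates in `P - A`. -/
noncomputable def psiTilde [Finite P] (A : Set P) (lam : P → ℝ)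
    (y : {p : P // p ∉ A} → ℝ) : {p : P // p ∉ A} → ℝ :=
  fun p => psiFull A lam y p

end Marked

/-!
Extend `ψ̃(y)` by `λ` on `A` to the full `ψ(y) : P → ℝ`. Then every value in the minimum defining
`φ̃(ψ̃ y)_p` is `ψ(y)_p - ψ(y)_q` for a cover `q ⋖ p`, so the minimum is
`ψ(y)_p - max_{q ⋖ p} ψ(y)_q`, which is `y_p` by the recursion defining `ψ`. The maximum is over a
nonempty set because `p ∉ A` is not minimal in the marked poset.
-/

variable {P : Type*} [PartialOrder P]

section Psi

variable [Finite P] (A : Set P) (lam : P → ℝ) (y : {p : P // p ∉ A} → ℝ)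

lemma psiFull_of_mem {p : P} (hp : p ∈ A) : psiFull A lam y p = lam p := by
  rw [psiFull, WellFounded.fix_eq, dif_pos hp]

lemma psiFull_of_notMem {p : P} (hp : p ∉ A) :
    psiFull A lam y p = y ⟨p, hp⟩ + sSup (psiFull A lam y '' {q | q ⋖ p}) := by
  rw [psiFull, WellFounded.fix_eq, dif_neg hp]
  congr 2
  ext v
  simp [eq_comm]

end Psi

lemma transferMap_restrict_eq_sInf (A : Set P) (lam : P → ℝ) {z : P → ℝ}
    (hz : ∀ a ∈ A, z a = lam a) (p : {p : P // p ∉ A}) :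
    transferMap A lam (fun q => z q) p = sInf ((z p - ·) '' (z '' {q | q ⋖ (p : P)})) := by
  rw [transferMap]
  congr 1
  ext v
  constructor
  · rintro (⟨q, hq, rfl⟩ | ⟨a, ha, hq, rfl⟩)
    · exact ⟨z q, ⟨q, hq, rfl⟩, rfl⟩
    · exact ⟨z a, ⟨a, hq, rfl⟩, by rw [hz a ha]⟩
  · rintro ⟨s, ⟨q, hq, rfl⟩, rfl⟩
    by_cases hqA : q ∈ A
    · exact Or.inr ⟨q, hqA, hq, by rw [hz q hqA]⟩
    · exact Or.inl ⟨⟨q, hqA⟩, hq, rfl⟩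

lemma transferMap_restrict_eq_sub_sSup [Finite P] (A : Set P) (lam : P → ℝ) {z : P → ℝ}
    (hz : ∀ a ∈ A, z a = lam a) {p : {p : P // p ∉ A}} (hp : ¬IsMin (p : P)) :
    transferMap A lam (fun q => z q) p = z p - sSup (z '' {q | q ⋖ (p : P)}) := by
  obtain ⟨r, hr⟩ := not_isMin_iff.mp hp
  obtain ⟨q, -, hq⟩ := exists_le_covBy_of_lt hr
  have hne : (z '' {q | q ⋖ (p : P)}).Nonempty := ⟨z q, q, hq, rfl⟩
  have hfin : (z '' {q | q ⋖ (p : P)}).Finite := (Set.toFinite _).image z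
  rw [transferMap_restrict_eq_sInf A lam hz p]
  exact (Antitone.map_csSup_of_continuousAt (continuous_sub_left (z p)).continuousAt
    (fun _ _ h => sub_le_sub_left h _) hne hfin.bddAbove).symm

/-- `φ̃ ∘ ψ̃` is the identity on the marked chain polytope. -/
theorem transferMap_psiTilde [Fintype P] (A : Set P) (lam : P → ℝ)
    (hA : IsMarkedPoset A) :
    ∀ y ∈ markedChainPolytope A lam, transferMap A lam (psiTilde A lam y) = y := by
  intro y _
  funext p
  have hp : ¬IsMin (p : P) := fun h => p.2 (hA p (Or.inl h))
  change transferMap A lam (fun q => psiFull A lam y q) p = y p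
  rw [transferMap_restrict_eq_sub_sSup A lam (fun a ha => psiFull_of_mem A lam y ha) hp,
    psiFull_of_notMem A lam y p.2]
  ring
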